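/- arXiv:0708.3036 — 5 statements merged into one kernel-verified Lean document; each statement's English description precedes it below -/
import Mathlib

section
/- Let 𝒜 be an abelian category. Suppose given, for each i ∈ ℤ, objects B^i, C^i, G^i of 𝒜, a short exact sequence 0 → B^i →(ι_i) C^i →(ρ_i) G^{i+1} → 0, and an epimorphism π_i : G^i → B^i, and let d^i := ι_{i+1} ∘ π_{i+1} ∘ ρ_i : C^i → C^{i+1} (so that (C^•, d) is a cochain complex). Then for every i ∈ ℤ there is an isomorphism H^{i+1}(C^•, d) ≅ ker(π_{i+2} : G^{i+2} → B^{i+2}), where H^{i+1}(C^•, d) = ker(d^{i+1})/im(d^i). -/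
open CategoryTheory CategoryTheory.Limits

/-!
Precomposing the first map of a short complex with an epimorphism, or postcomposing the second
with a monomorphism, does not change its homology. Applying this to the epimorphisms `ρ_i`,
`π_{i+1}` and the monomorphism `ι_{i+2}` reduces `H^{i+1}` to the homology of
`B^{i+1} → C^{i+1} → B^{i+2}`, with maps `ι_{i+1}` and `π_{i+2} ∘ ρ_{i+1}`. Since `ρ_{i+1}` is a
cokernel of `ι_{i+1}`, that homology is the kernel of the map `G^{i+2} → B^{i+2}` it induces,
namely `π_{i+2}`.
-/

namespace CategoryTheory.ShortComplex

variable {𝒜 : Type*} [Category 𝒜] [Abelian 𝒜]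

noncomputable def homologyIsoOfEpiComp {X₀ X₁ X₂ X₃ : 𝒜} (e : X₀ ⟶ X₁) [Epi e]
    (f : X₁ ⟶ X₂) (g : X₂ ⟶ X₃) (w : f ≫ g = 0) :
    (ShortComplex.mk (e ≫ f) g (by simp [w])).homology ≅ (ShortComplex.mk f g w).homology :=
  asIso (homologyMap
    { τ₁ := e, τ₂ := 𝟙 _, τ₃ := 𝟙 _ : ShortComplex.mk (e ≫ f) g _ ⟶ ShortComplex.mk f g w })

noncomputable def homologyIsoOfCompMono {X₁ X₂ X₃ X₄ : 𝒜} (f : X₁ ⟶ X₂) (g : X₂ ⟶ X₃)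
    (m : X₃ ⟶ X₄) [Mono m] (w : f ≫ g = 0) :
    (ShortComplex.mk f (g ≫ m) (by simp [reassoc_of% w])).homology ≅
      (ShortComplex.mk f g w).homology :=
  (asIso (homologyMap
    { τ₁ := 𝟙 _, τ₂ := 𝟙 _, τ₃ := m : ShortComplex.mk f g w ⟶ ShortComplex.mk f (g ≫ m) _ })).symm

noncomputable def Exact.homologyIsoKernelOfComp {S : ShortComplex 𝒜} (hS : S.Exact) [Epi S.g]
    {Y : 𝒜} (π : S.X₃ ⟶ Y) :
    (ShortComplex.mk S.f (S.g ≫ π) (by simp)).homology ≅ kernel π :=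
  let hp := hS.gIsCokernel
  let π' := hp.desc (CokernelCofork.ofπ (S.g ≫ π) (by simp))
  have hπ' : π' = π := by
    rw [← cancel_epi S.g]
    exact Cofork.IsColimit.π_desc hp
  let h : (ShortComplex.mk S.f (S.g ≫ π) (by simp)).RightHomologyData :=
    { Q := S.X₃, H := kernel π', p := S.g, ι := kernel.ι π', wp := S.zero, hp := hp,
      wι := kernel.condition π', hι := kernelIsKernel π' }
  h.homologyIso ≪≫ kernelIsoOfEq hπ'

end CategoryTheory.ShortComplex

/-- With data as in Statement 0 (short exact sequences
`0 → B^i →(ι_i) C^i →(ρ_i) G^{i+1} → 0` and epimorphisms `π_i : G^i → B^i`), and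
`d^i := ι_{i+1} ∘ π_{i+1} ∘ ρ_i`, the cohomology `H^{i+1}(C^•, d)` is isomorphic to
`ker (π_{i+2})`. -/
theorem franke_Q_cohomology
    {𝒜 : Type*} [Category 𝒜] [Abelian 𝒜]
    (B C G : ℤ → 𝒜)
    (ι : ∀ i : ℤ, B i ⟶ C i) (ρ : ∀ i : ℤ, C i ⟶ G (i + 1))
    (π : ∀ i : ℤ, G i ⟶ B i)
    (w : ∀ i : ℤ, ι i ≫ ρ i = 0)
    (hses : ∀ i : ℤ, (ShortComplex.mk (ι i) (ρ i) (w i)).ShortExact)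
    (hπ : ∀ i : ℤ, Epi (π i)) :
    ∀ i : ℤ, Nonempty
      ((ShortComplex.mk
          (ρ i ≫ π (i + 1) ≫ ι (i + 1))
          (ρ (i + 1) ≫ π (i + 1 + 1) ≫ ι (i + 1 + 1))
          (by
            have h := w (i + 1)
            simp [reassoc_of% h])).homology
        ≅ kernel (π (i + 1 + 1))) := by
  intro i
  have := (hses i).epi_g
  have := (hses (i + 1)).epi_g
  have := (hses (i + 1 + 1)).mono_f
  have hw := w (i + 1)
  simp only [← Category.assoc (ρ (i + 1))]
  exact ⟨ShortComplex.homologyIsoOfEpiComp (ρ i) _ _ (by simp [reassoc_of% hw]) ≪≫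
    ShortComplex.homologyIsoOfCompMono _ _ (ι (i + 1 + 1)) (by simp [reassoc_of% hw]) ≪≫
    ShortComplex.homologyIsoOfEpiComp (π (i + 1)) _ _ (by simp [reassoc_of% hw]) ≪≫
    (hses (i + 1)).exact.homologyIsoKernelOfComp (π (i + 1 + 1))⟩
end

section
/- Let K, M, N, P, Q₁, Q₂ be abelian groups, and let a : K → M, m : M → P, δ₁ : P → Q₁, δ₂ : P → Q₂, b : K → N, n : N → P, q : M → N be group homomorphisms such that: the sequence 0 → K →(a) M →(m) P →(δ₁,δ₂) Q₁ ⊕ Q₂ is exact, the sequence 0 → K →(b) N →(n) P →(δ₁) Q₁ is exact, q ∘ a = b, and n ∘ q = m. Then the sequence 0 → M →(q) N →(δ₂ ∘ n) Q₂ is exact; that is, q is injective and the image of q equals the kernel of δ₂ ∘ n. -/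
/-!
Both statements are chases through `n ∘ q = m` and `q ∘ a = b`. If `q x = 0` then `m x = 0`,
so `x = a k` with `b k = q x = 0`, whence `k = 0` and `x = 0`. If `δ₂ (n y) = 0`, then also
`δ₁ (n y) = 0` because `n y` lies in the range of `n`, so `n y = m x = n (q x)` for some `x`;
then `y - q x ∈ ker n = range b = q (range a)`, so `y` lies in the range of `q`.
-/

namespace Function.Exact

variable {K M N P : Type*} [AddGroup K] [AddGroup M] [AddGroup N] [AddGroup P]
  {a : K →+ M} {m : M →+ P} {b : K →+ N} {n : N →+ P} {q : M →+ N}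

theorem injective_of_injective_comp (ham : Exact a m) (hb : Injective b)
    (hqa : ∀ k, q (a k) = b k) (hnq : ∀ x, n (q x) = m x) : Injective q := by
  refine (injective_iff_map_eq_zero q).mpr fun x hx => ?_
  obtain ⟨k, rfl⟩ := (ham x).mp (by rw [← hnq, hx, map_zero])
  have hk : k = 0 := (injective_iff_map_eq_zero b).mp hb k (by rw [← hqa, hx])
  rw [hk, map_zero]

theorem mem_range_of_apply_mem_range (hbn : Exact b n) (hqa : ∀ k, q (a k) = b k)
    (hnq : ∀ x, n (q x) = m x) {y : N} (hy : n y ∈ Set.range m) : y ∈ Set.range q := by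
  obtain ⟨x, hx⟩ := hy
  obtain ⟨k, hk⟩ := (hbn (y - q x)).mp (by rw [map_sub, hnq, hx, sub_self])
  refine ⟨a k + x, ?_⟩
  rw [map_add, hqa, hk, sub_add_cancel]

end Function.Exact

theorem diagram_chase_exact_general
    {K M N P Q₁ Q₂ : Type*}
    [AddCommGroup K] [AddCommGroup M] [AddCommGroup N] [AddCommGroup P]
    [AddCommGroup Q₁] [AddCommGroup Q₂]
    (a : K →+ M) (m : M →+ P) (δ₁ : P →+ Q₁) (δ₂ : P →+ Q₂)
    (b : K →+ N) (n : N →+ P) (q : M →+ N)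
    (ham : Function.Exact a m)
    (hmδ : Function.Exact m (fun p => (δ₁ p, δ₂ p)))
    (hb : Function.Injective b)
    (hbn : Function.Exact b n)
    (hnδ₁ : Function.Exact n δ₁)
    (hqa : ∀ k, q (a k) = b k)
    (hnq : ∀ x, n (q x) = m x) :
    Function.Injective q ∧ Function.Exact q (fun y => δ₂ (n y)) := by
  refine ⟨ham.injective_of_injective_comp hb hqa hnq, fun y => ⟨fun hy => ?_, ?_⟩⟩
  · have hmy : n y ∈ Set.range m :=
      (hmδ (n y)).mp (Prod.ext (hnδ₁.apply_apply_eq_zero y) hy)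
    exact hbn.mem_range_of_apply_mem_range hqa hnq hmy
  · rintro ⟨x, rfl⟩
    simpa only [hnq, Prod.snd_zero] using congrArg Prod.snd (hmδ.apply_apply_eq_zero x)

/-- Let `K, M, N, P, Q₁, Q₂` be abelian groups with homomorphisms
`a : K → M`, `m : M → P`, `δ₁ : P → Q₁`, `δ₂ : P → Q₂`, `b : K → N`, `n : N → P`,
`q : M → N` such that `0 → K →(a) M →(m) P →(δ₁,δ₂) Q₁ ⊕ Q₂` is exact,
`0 → K →(b) N →(n) P →(δ₁) Q₁` is exact, `q ∘ a = b` and `n ∘ q = m`.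
Then `0 → M →(q) N →(δ₂ ∘ n) Q₂` is exact: `q` is injective and the image of `q`
equals the kernel of `δ₂ ∘ n`. -/
theorem diagram_chase_exact
    {K M N P Q₁ Q₂ : Type*}
    [AddCommGroup K] [AddCommGroup M] [AddCommGroup N] [AddCommGroup P]
    [AddCommGroup Q₁] [AddCommGroup Q₂]
    (a : K →+ M) (m : M →+ P) (δ₁ : P →+ Q₁) (δ₂ : P →+ Q₂)
    (b : K →+ N) (n : N →+ P) (q : M →+ N)
    (ha : Function.Injective a)
    (ham : Function.Exact a m)
    (hmδ : Function.Exact m (fun p => (δ₁ p, δ₂ p)))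
    (hb : Function.Injective b)
    (hbn : Function.Exact b n)
    (hnδ₁ : Function.Exact n δ₁)
    (hqa : ∀ k, q (a k) = b k)
    (hnq : ∀ x, n (q x) = m x) :
    Function.Injective q ∧ Function.Exact q (fun y => δ₂ (n y)) :=
  diagram_chase_exact_general a m δ₁ δ₂ b n q ham hmδ hb hbn hnδ₁ hqa hnq
end

section
/- Let 𝒜 be an abelian category and let (C^•, d) be a cochain complex over 𝒜 such that for every i ∈ ℤ the object of coboundaries B^i := im(d^{i−1} : C^{i−1} → C^i) and the cohomology H^i := ker(d^i)/im(d^{i−1}) are injective objects of 𝒜. Then C^• is isomorphic, as a cochain complex, to the direct sum H^• ⊕ D^•, where H^• is the complex with i-th term H^i and zero differentials, and D^• is the exact complex with i-th term B^i ⊕ B^{i+1} and differential (x, y) ↦ (y, 0) : B^i ⊕ B^{i+1} → B^{i+1} ⊕ B^{i+2}. -/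
/-!
For a short complex `X₁ --f--> X₂ --g--> X₃` with cycles `Z` and homology `H`, the short exact
sequence `0 → im f → Z → H → 0` splits because `im f` is injective, so `Z ≅ im f ⊞ H` is
injective as well; then `0 → Z → X₂ → im g → 0` splits too, and `X₂ ≅ H ⊞ (im f ⊞ im g)`.
In these coordinates `g` is the projection onto `im g` followed by the inclusion of `im g` as the
middle summand of the next term, i.e. `(h, x, y) ↦ (0, y, 0)`: the differential of `H^• ⊕ D^•`.
-/

open CategoryTheory CategoryTheory.Limits

namespace CategoryTheory.ShortComplex

variable {C : Type*} [Category C] [Abelian C] (S : ShortComplex C)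

lemma image_ι_f_comp_g : image.ι S.f ≫ S.g = 0 := by
  rw [← cancel_epi (factorThruImage S.f), image.fac_assoc, S.zero, comp_zero]

noncomputable def imageToCycles : image S.f ⟶ S.cycles :=
  S.liftCycles (image.ι S.f) S.image_ι_f_comp_g

@[simp]
lemma imageToCycles_iCycles : S.imageToCycles ≫ S.iCycles = image.ι S.f :=
  S.liftCycles_i _ _

@[simp]
lemma factorThruImage_imageToCycles : factorThruImage S.f ≫ S.imageToCycles = S.toCycles := by
  rw [← cancel_mono S.iCycles]; simp

@[simp]
lemma imageToCycles_homologyπ : S.imageToCycles ≫ S.homologyπ = 0 := by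
  rw [← cancel_epi (factorThruImage S.f), ← Category.assoc]; simp

instance : Mono S.imageToCycles := mono_of_mono_fac S.imageToCycles_iCycles

lemma shortExact_imageToCycles_homologyπ :
    (ShortComplex.mk S.imageToCycles S.homologyπ S.imageToCycles_homologyπ).ShortExact where
  exact := by
    let φ : ShortComplex.mk S.toCycles S.homologyπ S.toCycles_comp_homologyπ ⟶
        ShortComplex.mk S.imageToCycles S.homologyπ S.imageToCycles_homologyπ :=
      { τ₁ := factorThruImage S.f, τ₂ := 𝟙 _, τ₃ := 𝟙 _ }
    have : Epi φ.τ₁ := by dsimp [φ]; infer_instance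
    exact (exact_iff_of_epi_of_isIso_of_mono φ).1 (exact_of_g_is_cokernel _ S.homologyIsCokernel)
  mono_f := by dsimp; infer_instance

@[simp]
lemma iCycles_factorThruImage_g : S.iCycles ≫ factorThruImage S.g = 0 := by
  rw [← cancel_mono (image.ι S.g)]; simp

lemma shortExact_iCycles_factorThruImage :
    (ShortComplex.mk S.iCycles (factorThruImage S.g) S.iCycles_factorThruImage_g).ShortExact where
  exact := by
    let φ : ShortComplex.mk S.iCycles (factorThruImage S.g) S.iCycles_factorThruImage_g ⟶
        ShortComplex.mk S.iCycles S.g S.iCycles_g :=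
      { τ₁ := 𝟙 _, τ₂ := 𝟙 _, τ₃ := image.ι S.g }
    have : Mono φ.τ₃ := by dsimp [φ]; infer_instance
    exact (exact_iff_of_epi_of_isIso_of_mono φ).2 (exact_of_f_is_kernel _ S.cyclesIsKernel)
  epi_g := by dsimp; infer_instance

variable [Injective (image S.f)]

noncomputable def imageToCyclesSplitting :
    (ShortComplex.mk S.imageToCycles S.homologyπ S.imageToCycles_homologyπ).Splitting :=
  S.shortExact_imageToCycles_homologyπ.splittingOfInjective

variable [Injective S.homology]

instance injective_cycles : Injective S.cycles :=
  Injective.of_iso S.imageToCyclesSplitting.isoBinaryBiproduct.symm inferInstance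

noncomputable def iCyclesSplitting :
    (ShortComplex.mk S.iCycles (factorThruImage S.g) S.iCycles_factorThruImage_g).Splitting :=
  S.shortExact_iCycles_factorThruImage.splittingOfInjective

noncomputable def isoHomologyBiprod : S.X₂ ≅ S.homology ⊞ (image S.f ⊞ image S.g) :=
  S.iCyclesSplitting.isoBinaryBiproduct ≪≫
    biprod.mapIso (S.imageToCyclesSplitting.isoBinaryBiproduct ≪≫ biprod.braiding _ _)
      (Iso.refl _) ≪≫
    biprod.associator _ _ _

@[simp]
lemma isoHomologyBiprod_hom_snd_snd :
    S.isoHomologyBiprod.hom ≫ biprod.snd ≫ biprod.snd = factorThruImage S.g := by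
  simp [isoHomologyBiprod]

@[simp]
lemma image_ι_isoHomologyBiprod_hom :
    image.ι S.f ≫ S.isoHomologyBiprod.hom = biprod.inl ≫ biprod.inr := by
  have r₁ := S.imageToCyclesSplitting.f_r
  have r₂ := S.iCyclesSplitting.f_r
  dsimp at r₁ r₂
  -- `image.ι S.f` is kept factored through the cycles so that `r₁` and `r₂` apply.
  rw [← S.imageToCycles_iCycles]
  apply biprod.hom_ext <;> try apply biprod.hom_ext
  all_goals simp [isoHomologyBiprod, r₁, reassoc_of% r₂, -imageToCycles_iCycles]

lemma g_comp_isoHomologyBiprod_hom {X₄ : C} (h : S.X₃ ⟶ X₄) (w : S.g ≫ h = 0)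
    [Injective (image S.g)] [Injective (ShortComplex.mk S.g h w).homology] :
    S.g ≫ (ShortComplex.mk S.g h w).isoHomologyBiprod.hom =
      S.isoHomologyBiprod.hom ≫
        biprod.map (0 : S.homology ⟶ (ShortComplex.mk S.g h w).homology)
          (biprod.lift biprod.snd (0 : image S.f ⊞ image S.g ⟶ image h)) := by
  have hg : S.g ≫ (ShortComplex.mk S.g h w).isoHomologyBiprod.hom =
      factorThruImage S.g ≫ biprod.inl ≫ biprod.inr := by
    rw [← image.fac_assoc S.g, image_ι_isoHomologyBiprod_hom (ShortComplex.mk S.g h w)]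
  rw [hg]
  apply biprod.hom_ext <;> try apply biprod.hom_ext
  all_goals simp

end CategoryTheory.ShortComplex

/-- Let `(C^•, d)` be a cochain complex over an abelian category `𝒜`
such that all coboundary objects `B^i = im d^{i-1}` and all cohomology objects
`H^i = ker d^i / im d^{i-1}` are injective.  Then `C^•` is isomorphic, as a cochain
complex, to `H^• ⊕ D^•`, where `H^•` has zero differentials and `D^•` is the exact
complex with `i`-th term `B^i ⊕ B^{i+1}` and differential `(x, y) ↦ (y, 0)`.
(The splitting isomorphism is recorded degreewise, in degree `i + 1` for each `i ∈ ℤ`,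
together with its compatibility with the differentials.) -/
theorem complex_splits_of_injective_boundaries_and_cohomology
    {𝒜 : Type*} [Category 𝒜] [Abelian 𝒜]
    (C : ℤ → 𝒜) (d : ∀ i : ℤ, C i ⟶ C (i + 1))
    (dd : ∀ i : ℤ, d i ≫ d (i + 1) = 0)
    (hB : ∀ i : ℤ, Injective (image (d i)))
    (hH : ∀ i : ℤ, Injective ((ShortComplex.mk (d i) (d (i + 1)) (dd i)).homology)) :
    ∃ φ : ∀ i : ℤ, C (i + 1) ≅
        ((ShortComplex.mk (d i) (d (i + 1)) (dd i)).homology ⊞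
          (image (d i) ⊞ image (d (i + 1)))),
      ∀ i : ℤ, (φ i).hom ≫
          biprod.map
            (0 : (ShortComplex.mk (d i) (d (i + 1)) (dd i)).homology ⟶
              (ShortComplex.mk (d (i + 1)) (d (i + 1 + 1)) (dd (i + 1))).homology)
            (biprod.lift
              (biprod.snd : image (d i) ⊞ image (d (i + 1)) ⟶ image (d (i + 1)))
              (0 : image (d i) ⊞ image (d (i + 1)) ⟶ image (d (i + 1 + 1))))
        = d (i + 1) ≫ (φ (i + 1)).hom := by
  have := hB
  have := hH
  exact ⟨fun i => (ShortComplex.mk (d i) (d (i + 1)) (dd i)).isoHomologyBiprod,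
    fun i => ((ShortComplex.mk (d i) (d (i + 1)) (dd i)).g_comp_isoHomologyBiprod_hom
      (d (i + 1 + 1)) (dd (i + 1))).symm⟩
end

section
/- Let 0 → C^• →(i) K^• → L^• → 0 be a degreewise short exact sequence of cochain complexes over an abelian category 𝒜, and suppose that i : C^• → K^• is a quasi-isomorphism (equivalently, L^• is acyclic). Then for each n ∈ ℤ the induced sequence of coboundary objects 0 → B^n(C) → B^n(K) → B^n(L) → 0 is short exact, where B^n(−) denotes the image of the differential d^{n−1}. -/
/-!
Since `i` is a quasi-isomorphism, the long exact homology sequence makes `L` acyclic. View the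
differentials `d^{n-1}` as a morphism from the short exact sequence in degree `n - 1` to the one in
degree `n`, and take images. Injectivity on `B^n` comes from injectivity of `i^n`, surjectivity
from surjectivity of `p^{n-1}`. For exactness in the middle, a boundary `d x` of `K` killed by `p`
has `p x` a cycle of `L`, hence a boundary `d (p y)`; then `x - d y` comes from `C^{n-1}`.
-/

open CategoryTheory CategoryTheory.Limits

namespace CategoryTheory

section ImageMap

variable {𝒞 : Type*} [Category 𝒞] {f g : Arrow 𝒞} [HasImage f.hom] [HasImage g.hom]
  (sq : f ⟶ g) [HasImageMap sq]

lemma Limits.image.map_mono (h : Mono sq.right) : Mono (image.map sq) :=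
  have : Mono (image.ι f.hom ≫ sq.right) := mono_comp _ _
  mono_of_mono_fac (image.map_ι sq)

lemma Limits.image.map_epi [HasEqualizers 𝒞] (h : Epi sq.left) : Epi (image.map sq) :=
  have : Epi (sq.left ≫ factorThruImage g.hom) := epi_comp _ _
  epi_of_epi_fac (image.factor_map sq)

lemma Limits.image.map_comp_map_eq_zero [HasZeroMorphisms 𝒞] {h : Arrow 𝒞} [HasImage h.hom]
    (sq' : g ⟶ h) [HasImageMap sq'] (hw : sq.right ≫ sq'.right = 0) :
    image.map sq ≫ image.map sq' = 0 := by
  rw [← cancel_mono (image.ι h.hom)]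
  simp [hw]

end ImageMap

variable {𝒜 : Type*} [Category 𝒜] [Abelian 𝒜]

lemma ShortComplex.exact_image_map {f₁ f₂ f₃ : Arrow 𝒜} (α : f₁ ⟶ f₂) (β : f₂ ⟶ f₃)
    (hw : α.left ≫ β.left = 0) (hw' : image.map α ≫ image.map β = 0)
    (hex : (ShortComplex.mk α.left β.left hw).Exact)
    (hβ : Epi (kernel.map f₂.hom f₃.hom β.left β.right β.w.symm)) :
    (ShortComplex.mk (image.map α) (image.map β) hw').Exact := by
  rw [ShortComplex.exact_iff_exact_up_to_refinements]
  intro A b (hb : b ≫ image.map β = 0)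
  obtain ⟨A₁, π₁, _, y, hy⟩ := surjective_up_to_refinements_of_epi (factorThruImage f₂.hom) b
  have hyβ : (y ≫ β.left) ≫ f₃.hom = 0 :=
    calc (y ≫ β.left) ≫ f₃.hom
        = (y ≫ factorThruImage f₂.hom) ≫ image.map β ≫ image.ι f₃.hom := by simp
      _ = 0 := by rw [← hy, Category.assoc, reassoc_of% hb, zero_comp, comp_zero]
  obtain ⟨A₂, π₂, _, z, hz⟩ := surjective_up_to_refinements_of_epi
    (kernel.map f₂.hom f₃.hom β.left β.right β.w.symm) (kernel.lift _ _ hyβ)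
  have hr : (π₂ ≫ y - z ≫ kernel.ι f₂.hom) ≫ β.left = 0 := by
    have := hz =≫ kernel.ι f₃.hom
    simp only [Category.assoc, kernel.lift_ι] at this
    simp [this]
  obtain ⟨A₃, π₃, _, u, hu⟩ := hex.exact_up_to_refinements _ hr
  refine ⟨A₃, π₃ ≫ π₂ ≫ π₁, inferInstance, u ≫ factorThruImage f₁.hom, ?_⟩
  have hu' := hu =≫ f₂.hom
  simp only [Category.assoc, Preadditive.sub_comp, kernel.condition, comp_zero, sub_zero] at hu'
  rw [← cancel_mono (image.ι f₂.hom)]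
  simp only [Category.assoc, image.map_ι, image.fac_assoc, ← Arrow.w α]
  rw [← hu', reassoc_of% hy, image.fac]

end CategoryTheory

lemma HomologicalComplex.epi_kernel_map_d {𝒜 : Type*} [Category 𝒜] [Abelian 𝒜] {ι : Type*}
    {c : ComplexShape ι} {K L : HomologicalComplex 𝒜 c} (p : K ⟶ L) (k j l : ι)
    (hL : (L.sc' k j l).Exact) [Epi (p.f k)] :
    Epi (kernel.map (K.d j l) (L.d j l) (p.f j) (p.f l) (p.comm j l).symm) := by
  have : Epi (kernel.lift (L.d j l) (L.d k j) (L.d_comp_d k j l)) := hL.epi_kernelLift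
  exact epi_of_epi_fac (f := kernel.lift (K.d j l) (K.d k j) (K.d_comp_d k j l))
    (h := p.f k ≫ kernel.lift (L.d j l) (L.d k j) (L.d_comp_d k j l)) (by ext; simp)

/-- Let `0 → C^• →(i) K^• →(p) L^• → 0` be a degreewise short exact
sequence of cochain complexes over an abelian category `𝒜` with `i` a quasi-isomorphism.
Then for each `n ∈ ℤ` the induced sequence of coboundary objects
`0 → B^n(C) → B^n(K) → B^n(L) → 0` is short exact, where `B^n(−) = im (d^{n-1})`. -/
theorem boundaries_shortExact_of_qis
    {𝒜 : Type*} [Category 𝒜] [Abelian 𝒜]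
    (C K L : CochainComplex 𝒜 ℤ) (i : C ⟶ K) (p : K ⟶ L)
    (w : ∀ n : ℤ, i.f n ≫ p.f n = 0)
    (hses : ∀ n : ℤ, (ShortComplex.mk (i.f n) (p.f n) (w n)).ShortExact)
    (hqis : QuasiIso i) :
    ∀ n : ℤ, ∃ w0 :
        image.map (Arrow.homMk (f := Arrow.mk (C.d (n - 1) n)) (g := Arrow.mk (K.d (n - 1) n))
            (u := i.f (n - 1)) (v := i.f n) (i.comm (n - 1) n)) ≫
          image.map (Arrow.homMk (f := Arrow.mk (K.d (n - 1) n)) (g := Arrow.mk (L.d (n - 1) n))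
            (u := p.f (n - 1)) (v := p.f n) (p.comm (n - 1) n)) = 0,
      (ShortComplex.mk
        (image.map (Arrow.homMk (f := Arrow.mk (C.d (n - 1) n)) (g := Arrow.mk (K.d (n - 1) n))
            (u := i.f (n - 1)) (v := i.f n) (i.comm (n - 1) n)))
        (image.map (Arrow.homMk (f := Arrow.mk (K.d (n - 1) n)) (g := Arrow.mk (L.d (n - 1) n))
            (u := p.f (n - 1)) (v := p.f n) (p.comm (n - 1) n)))
        w0).ShortExact := by
  intro n
  have hS : (ShortComplex.mk i p (by ext m; exact w m)).ShortExact :=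
    HomologicalComplex.shortExact_of_degreewise_shortExact _ hses
  have hL : (L.sc' (n - 2) (n - 1) n).Exact :=
    (L.exactAt_iff' (n - 2) (n - 1) n (by simp; ring) (by simp)).1 (hS.acyclic_X₃ hqis (n - 1))
  have := (hses (n - 2)).epi_g
  refine ⟨image.map_comp_map_eq_zero _ _ (w n), ?_⟩
  exact
    { exact := ShortComplex.exact_image_map _ _ (w (n - 1)) _ (hses (n - 1)).exact
        (HomologicalComplex.epi_kernel_map_d p (n - 2) (n - 1) n hL)
      mono_f := image.map_mono _ (hses n).mono_f
      epi_g := image.map_epi _ (hses (n - 1)).epi_g }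
end

section
/- Let 𝒜 be an abelian category with enough injectives, let I be an injective object of 𝒜, let n ∈ ℤ, and let C^• be a cochain complex over 𝒜. Then the group of morphisms in the derived category D(𝒜) from C^• to the complex consisting of I concentrated in degree n is naturally isomorphic to Hom_𝒜(H^n(C^•), I). -/
/-!
The complex `I[-n]` is bounded below with injective terms, hence K-injective, so every morphism
`Q C ⟶ I[-n]` in `D(𝒜)` comes from a chain map `C ⟶ I[-n]`, that is, from a map `C^n ⟶ I`
killing the boundaries. Injectivity of `I` makes `H^n` bijective on such maps up to homotopy:
a map `H^n C ⟶ I`, restricted to `Z^n C`, extends along the monomorphism `Z^n C ⟶ C^n`, and a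
map `C^n ⟶ I` vanishing on `Z^n C` factors through `d : C^n ⟶ C^{n+1}`, giving a null-homotopy.
-/

open CategoryTheory CategoryTheory.Limits

universe w v u

namespace HomologicalComplex

variable {𝒜 : Type u} [Category.{v} 𝒜] [Abelian 𝒜] {ι : Type*} {c : ComplexShape ι}

lemma exists_d_comp_eq_of_iCycles_comp_eq_zero (K : HomologicalComplex 𝒜 c) {i j : ι}
    (hij : c.next i = j) {I : 𝒜} [Injective I] (u : K.X i ⟶ I) (hu : K.iCycles i ≫ u = 0) :
    ∃ h : K.X j ⟶ I, K.d i j ≫ h = u :=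
  have hS : (ShortComplex.mk _ _ (K.iCycles_d i j)).Exact :=
    ShortComplex.exact_of_f_is_kernel _ (K.cyclesIsKernel i j hij)
  ⟨hS.descToInjective u hu, hS.comp_descToInjective u hu⟩

variable [DecidableEq ι] {K : HomologicalComplex 𝒜 c} {I : 𝒜} {j : ι}

lemma homologyπ_homologyMap_toSingle (f : K ⟶ (single 𝒜 c j).obj I) :
    K.homologyπ j ≫ homologyMap f j ≫ (singleObjHomologySelfIso c j I).hom =
      K.iCycles j ≫ f.f j ≫ (singleObjXSelf c j I).hom := by
  rw [homologyπ_naturality_assoc, homologyπ_singleObjHomologySelfIso_hom,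
    singleObjCyclesSelfIso_hom, cyclesMap_i_assoc]

lemma exists_homologyMap_toSingle_eq [Injective I]
    (φ : K.homology j ⟶ ((single 𝒜 c j).obj I).homology j) :
    ∃ f : K ⟶ (single 𝒜 c j).obj I, homologyMap f j = φ := by
  set ψ := K.homologyπ j ≫ φ ≫ (singleObjHomologySelfIso c j I).hom
  refine ⟨mkHomToSingle (Injective.factorThru ψ (K.iCycles j)) fun i hi => ?_, ?_⟩
  · rw [← K.toCycles_i i j, Category.assoc, Injective.comp_factorThru,
      K.toCycles_comp_homologyπ_assoc, zero_comp]
  · rw [← cancel_epi (K.homologyπ j), ← cancel_mono (singleObjHomologySelfIso c j I).hom,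
      Category.assoc, homologyπ_homologyMap_toSingle, mkHomToSingle_f]
    simp [ψ]

end HomologicalComplex

namespace CochainComplex

open HomologicalComplex DerivedCategory

variable {𝒜 : Type u} [Category.{v} 𝒜] [Abelian 𝒜]

instance isKInjective_single (I : 𝒜) [Injective I] (n : ℤ) :
    IsKInjective ((single 𝒜 (ComplexShape.up ℤ) n).obj I) :=
  isKInjective_of_injective _ n

lemma IsKInjective.Q_map_surjective [HasDerivedCategory.{w} 𝒜]
    (K L : CochainComplex 𝒜 ℤ) [L.IsKInjective] :
    Function.Surjective (Q.map : (K ⟶ L) → (Q.obj K ⟶ Q.obj L)) := by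
  intro g
  obtain ⟨φ, hφ⟩ := (IsKInjective.Qh_map_bijective _ L).surjective
    ((quotientCompQhIso 𝒜).hom.app K ≫ g ≫ (quotientCompQhIso 𝒜).inv.app L)
  obtain ⟨f, rfl⟩ := (HomotopyCategory.quotient 𝒜 _).map_surjective φ
  refine ⟨f, ?_⟩
  rw [← cancel_epi ((quotientCompQhIso 𝒜).hom.app K), ← quotientCompQhIso_hom_naturality, hφ]
  simp

open HomComplex in
lemma nonempty_homotopy_zero_of_homologyMap_toSingle_eq_zero {C : CochainComplex 𝒜 ℤ}
    {I : 𝒜} [Injective I] {n : ℤ} (f : C ⟶ (single 𝒜 (ComplexShape.up ℤ) n).obj I)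
    (hf : homologyMap f n = 0) :
    Nonempty (Homotopy f 0) := by
  have hu : C.iCycles n ≫ f.f n ≫ (singleObjXSelf _ n I).hom = 0 := by
    rw [← homologyπ_homologyMap_toSingle, hf, zero_comp, comp_zero]
  obtain ⟨h, hh⟩ := C.exists_d_comp_eq_of_iCycles_comp_eq_zero (j := n + 1) (by simp) _ hu
  refine ⟨(Cochain.equivHomotopy f 0).symm
    ⟨Cochain.single (h ≫ (singleObjXSelf _ n I).inv) (-1), ?_⟩⟩
  rw [Cochain.ofHom_zero, add_zero, Cochain.δ_single _ (-1) 0 (by lia) n (n + 1) rfl rfl]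
  ext p
  by_cases hp : p = n
  · subst hp
    simp [reassoc_of% hh]
  · exact (isZero_single_obj_X _ _ _ _ hp).eq_of_tgt _ _

end CochainComplex

namespace DerivedCategory

open HomologicalComplex

variable {𝒜 : Type u} [Category.{v} 𝒜] [Abelian 𝒜] [HasDerivedCategory.{w} 𝒜]
  {I : 𝒜} [Injective I] {n : ℤ}

lemma homologyFunctor_map_bijective_of_injective (C : CochainComplex 𝒜 ℤ) :
    Function.Bijective
      ((homologyFunctor 𝒜 n).map : (Q.obj C ⟶ (singleFunctor 𝒜 n).obj I) → _) := by
  set J := (single 𝒜 (ComplexShape.up ℤ) n).obj I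
  set e := homologyFunctorFactors 𝒜 n
  refine ⟨(injective_iff_map_eq_zero (homologyFunctor 𝒜 n).mapAddHom).2 fun g hg => ?_,
    fun ψ => ?_⟩
  · obtain ⟨f, rfl⟩ := CochainComplex.IsKInjective.Q_map_surjective C J g
    have hf : homologyMap f n = 0 := by
      have hnat := homologyFunctorFactors_hom_naturality f n
      rw [show (homologyFunctor 𝒜 n).map (Q.map f) = 0 from hg, zero_comp] at hnat
      exact (cancel_epi (e.hom.app C)).1 (hnat.symm.trans comp_zero.symm)
    obtain ⟨h⟩ := CochainComplex.nonempty_homotopy_zero_of_homologyMap_toSingle_eq_zero f hf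
    exact (Q_map_eq_of_homotopy _ h).trans (Q.map_zero _ _)
  · obtain ⟨f, hf⟩ := exists_homologyMap_toSingle_eq (e.inv.app C ≫ ψ ≫ e.hom.app J)
    refine ⟨Q.map f, (cancel_mono (e.hom.app J)).1
      ((homologyFunctorFactors_hom_naturality f n).trans ?_)⟩
    rw [hf]
    exact e.hom_inv_id_app_assoc C _

variable (I n) in
noncomputable def homologyAddEquivOfInjective (C : CochainComplex 𝒜 ℤ) :
    (Q.obj C ⟶ (singleFunctor 𝒜 n).obj I) ≃+ (C.homology n ⟶ I) :=
  AddEquiv.ofBijective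
    (AddMonoidHom.mk' (fun g => ((homologyFunctorFactors 𝒜 n).app C).homCongr
      ((singleFunctorCompHomologyFunctorIso 𝒜 n).app I) ((homologyFunctor 𝒜 n).map g))
      (by simp))
    ((Iso.homCongr _ _).bijective.comp (homologyFunctor_map_bijective_of_injective C))

lemma homologyAddEquivOfInjective_apply (C : CochainComplex 𝒜 ℤ)
    (g : Q.obj C ⟶ (singleFunctor 𝒜 n).obj I) :
    homologyAddEquivOfInjective I n C g = (homologyFunctorFactors 𝒜 n).inv.app C ≫
      (homologyFunctor 𝒜 n).map g ≫ (singleFunctorCompHomologyFunctorIso 𝒜 n).hom.app I :=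
  rfl

lemma homologyAddEquivOfInjective_Q_map_comp {C D : CochainComplex 𝒜 ℤ} (f : C ⟶ D)
    (g : Q.obj D ⟶ (singleFunctor 𝒜 n).obj I) :
    homologyAddEquivOfInjective I n C (Q.map f ≫ g) =
      homologyMap f n ≫ homologyAddEquivOfInjective I n D g := by
  rw [homologyAddEquivOfInjective_apply, homologyAddEquivOfInjective_apply, Functor.map_comp,
    Category.assoc]
  exact ((homologyFunctorFactors 𝒜 n).inv.naturality_assoc f _).symm

end DerivedCategory

theorem derivedCategory_hom_to_injective_single_general
    {𝒜 : Type u} [Category.{v} 𝒜] [Abelian 𝒜]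
    [HasDerivedCategory.{w} 𝒜]
    (I : 𝒜) (hI : Injective I) (n : ℤ) :
    ∃ e : ∀ C : CochainComplex 𝒜 ℤ,
        (DerivedCategory.Q.obj C ⟶ (DerivedCategory.singleFunctor 𝒜 n).obj I) ≃+
          (C.homology n ⟶ I),
      ∀ (C D : CochainComplex 𝒜 ℤ) (f : C ⟶ D)
        (g : DerivedCategory.Q.obj D ⟶ (DerivedCategory.singleFunctor 𝒜 n).obj I),
        e C (DerivedCategory.Q.map f ≫ g) =
          HomologicalComplex.homologyMap f n ≫ e D g :=
  ⟨DerivedCategory.homologyAddEquivOfInjective I n, fun _ _ f g =>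
    DerivedCategory.homologyAddEquivOfInjective_Q_map_comp f g⟩

/-- Let `𝒜` be an abelian category with enough injectives, `I` an
injective object, `n ∈ ℤ`.  Then for every cochain complex `C^•`, the group of morphisms
in the derived category `D(𝒜)` from `C^•` to the complex `I` concentrated in degree `n`
is isomorphic to `Hom_𝒜(H^n(C^•), I)`, naturally in `C^•`. -/
theorem derivedCategory_hom_to_injective_single
    {𝒜 : Type u} [Category.{v} 𝒜] [Abelian 𝒜] [EnoughInjectives 𝒜]
    [HasDerivedCategory.{w} 𝒜]
    (I : 𝒜) (hI : Injective I) (n : ℤ) :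
    ∃ e : ∀ C : CochainComplex 𝒜 ℤ,
        (DerivedCategory.Q.obj C ⟶ (DerivedCategory.singleFunctor 𝒜 n).obj I) ≃+
          (C.homology n ⟶ I),
      ∀ (C D : CochainComplex 𝒜 ℤ) (f : C ⟶ D)
        (g : DerivedCategory.Q.obj D ⟶ (DerivedCategory.singleFunctor 𝒜 n).obj I),
        e C (DerivedCategory.Q.map f ≫ g) =
          HomologicalComplex.homologyMap f n ≫ e D g :=
  derivedCategory_hom_to_injective_single_general I hI n
end
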